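/- (State Reduction.) Let N ≥ 1, let q ≥ 1 be an integer, and let x_0, …, x_{N−1} be nonnegative integers with ∑_k x_k = q. Let T be the set of probability vectors on N states that have at most two nonzero entries and all of whose entries are integer multiples of 1/q. Then the probability vector (x_0/q, …, x_{N−1}/q) lies in the family defined inductively by: each point mass δ_s and each element of T is realizable with cost 0; the N-state ½-pswitch is realizable with cost 1; and if p is realizable with cost a and r with cost b then p∗r and p⊕r are realizable with cost a+b — with total cost at most f(⌈log₂ q⌉, N). -/

import Mathlib

/-!
Let `n = ⌈log₂ q⌉` and cut `[0, 2ⁿq)` into consecutive blocks of lengths `2ⁿx_k`, so that a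
uniform point of `[0, 2ⁿq)` lies in block `k` with probability `x_k / q`. Halve this window
repeatedly. The law of a window is the average of the laws of its halves, and as every block met
by the left half precedes every block met by the right half, that average is
`smax (smin (halfSwitch N) right) left`, at cost one. After `n` halvings the windows have length
`q ≤ 2ⁿ`, so each meets at most two nonempty blocks, with masses in `(1/q)ℕ`; a window containing
no block boundary is a point mass and is not split. At most `N - 1` windows of a level contain a
boundary, whence the cost `∑_{t<n} min(2ᵗ, N - 1) ≤ f(n, N)`.
-/

noncomputable section

/-- Series composition: distribution of `min` of two independent states. -/
def smin {N : ℕ} (p q : Fin N → ℝ) : Fin N → ℝ :=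
  fun k => ∑ i, ∑ j, if min i j = k then p i * q j else 0

/-- Parallel composition: distribution of `max` of two independent states. -/
def smax {N : ℕ} (p q : Fin N → ℝ) : Fin N → ℝ :=
  fun k => ∑ i, ∑ j, if max i j = k then p i * q j else 0

/-- The point mass at state `s`. -/
def delta {N : ℕ} (s : Fin N) : Fin N → ℝ := fun i => if i = s then 1 else 0

/-- A probability vector on `N` states. -/
def IsProbVec {N : ℕ} (p : Fin N → ℝ) : Prop :=
  (∀ i, 0 ≤ p i) ∧ ∑ i, p i = 1

/-- The `N`-state ½-pswitch: probability ½ on state `0`, ½ on state `N-1`,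
and `0` elsewhere. -/
def halfSwitch (N : ℕ) : Fin N → ℝ :=
  fun i => (if (i : ℕ) = 0 then (1 : ℝ) / 2 else 0) + (if (i : ℕ) = N - 1 then (1 : ℝ) / 2 else 0)

/-- The complexity function `f(n,N)`: `2^n - 1` for `n ≤ ⌈log₂ N⌉` and
`(N-1)(n - ⌈log₂ N⌉) + 2^{⌈log₂ N⌉} - 1` for `n ≥ ⌈log₂ N⌉`. -/
def f (n N : ℕ) : ℕ :=
  if n ≤ Nat.clog 2 N then 2 ^ n - 1
  else (N - 1) * (n - Nat.clog 2 N) + 2 ^ (Nat.clog 2 N) - 1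

/-- `Realizable2 S₀ S₁ p m`: `p` is obtained from point masses and elements of
`S₀` (cost 0 each) and elements of `S₁` (cost 1 each) by series and parallel
compositions, at total cost `m`. -/
inductive Realizable2 {N : ℕ} (S₀ S₁ : Set (Fin N → ℝ)) : (Fin N → ℝ) → ℕ → Prop
  | point (s : Fin N) : Realizable2 S₀ S₁ (delta s) 0
  | free {p : Fin N → ℝ} : p ∈ S₀ → Realizable2 S₀ S₁ p 0
  | paid {p : Fin N → ℝ} : p ∈ S₁ → Realizable2 S₀ S₁ p 1
  | series {p q : Fin N → ℝ} {a b : ℕ} :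
      Realizable2 S₀ S₁ p a → Realizable2 S₀ S₁ q b → Realizable2 S₀ S₁ (smin p q) (a + b)
  | parallel {p q : Fin N → ℝ} {a b : ℕ} :
      Realizable2 S₀ S₁ p a → Realizable2 S₀ S₁ q b → Realizable2 S₀ S₁ (smax p q) (a + b)

section Composition

variable {N : ℕ}

lemma sum_sum_ite_mul_eq_right {p q : Fin N → ℝ} (φ : Fin N → Fin N → Fin N)
    (hp : ∑ i, p i = 1) (h : ∀ i j, p i ≠ 0 → q j ≠ 0 → φ i j = j) (k : Fin N) :
    ∑ i, ∑ j, (if φ i j = k then p i * q j else 0) = q k := by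
  have hterm : ∀ i j, (if φ i j = k then p i * q j else 0) = if j = k then p i * q j else 0 := by
    intro i j
    by_cases hpi : p i = 0
    · simp [hpi]
    by_cases hqj : q j = 0
    · simp [hqj]
    rw [h i j hpi hqj]
  simp only [hterm, Finset.sum_ite_eq', Finset.mem_univ, if_true, ← Finset.sum_mul, hp, one_mul]

lemma sum_sum_ite_mul_eq_left {p q : Fin N → ℝ} (φ : Fin N → Fin N → Fin N)
    (hq : ∑ j, q j = 1) (h : ∀ i j, p i ≠ 0 → q j ≠ 0 → φ i j = i) (k : Fin N) :
    ∑ i, ∑ j, (if φ i j = k then p i * q j else 0) = p k := by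
  rw [Finset.sum_comm]
  simpa only [mul_comm] using
    sum_sum_ite_mul_eq_right (fun j i => φ i j) hq (fun j i hj hi => h i j hi hj) k

lemma smin_eq_left_of_support_le {p q : Fin N → ℝ} (hq : ∑ j, q j = 1)
    (h : ∀ i j, p i ≠ 0 → q j ≠ 0 → i ≤ j) : smin p q = p :=
  funext <| sum_sum_ite_mul_eq_left min hq fun i j hi hj => min_eq_left (h i j hi hj)

lemma smin_eq_right_of_support_le {p q : Fin N → ℝ} (hp : ∑ i, p i = 1)
    (h : ∀ i j, p i ≠ 0 → q j ≠ 0 → j ≤ i) : smin p q = q :=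
  funext <| sum_sum_ite_mul_eq_right min hp fun i j hi hj => min_eq_right (h i j hi hj)

lemma smax_eq_left_of_support_le {p q : Fin N → ℝ} (hq : ∑ j, q j = 1)
    (h : ∀ i j, p i ≠ 0 → q j ≠ 0 → j ≤ i) : smax p q = p :=
  funext <| sum_sum_ite_mul_eq_left max hq fun i j hi hj => max_eq_left (h i j hi hj)

lemma smax_eq_right_of_support_le {p q : Fin N → ℝ} (hp : ∑ i, p i = 1)
    (h : ∀ i j, p i ≠ 0 → q j ≠ 0 → i ≤ j) : smax p q = q :=
  funext <| sum_sum_ite_mul_eq_right max hp fun i j hi hj => max_eq_right (h i j hi hj)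

lemma smin_add_left (p p' q : Fin N → ℝ) : smin (p + p') q = smin p q + smin p' q := by
  ext k
  simp only [smin, Pi.add_apply, add_mul, ite_add_zero, Finset.sum_add_distrib]

lemma smin_smul_left (c : ℝ) (p q : Fin N → ℝ) : smin (c • p) q = c • smin p q := by
  ext k
  simp only [smin, Pi.smul_apply, smul_eq_mul, Finset.mul_sum, mul_ite, mul_zero, mul_assoc]

lemma smax_add_left (p p' q : Fin N → ℝ) : smax (p + p') q = smax p q + smax p' q := by
  ext k
  simp only [smax, Pi.add_apply, add_mul, ite_add_zero, Finset.sum_add_distrib]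

lemma smax_smul_left (c : ℝ) (p q : Fin N → ℝ) : smax (c • p) q = c • smax p q := by
  ext k
  simp only [smax, Pi.smul_apply, smul_eq_mul, Finset.mul_sum, mul_ite, mul_zero, mul_assoc]

lemma sum_delta (s : Fin N) : ∑ i, delta s i = 1 := by
  simp [delta]

lemma eq_of_delta_ne_zero {s i : Fin N} (h : delta s i ≠ 0) : i = s := by
  by_contra hi
  simp [delta, hi] at h

lemma halfSwitch_eq_smul (hN : 0 < N) :
    halfSwitch N = (1 / 2 : ℝ) • (delta ⟨0, hN⟩ + delta ⟨N - 1, by omega⟩) := by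
  ext i
  simp only [halfSwitch, delta, Pi.smul_apply, Pi.add_apply, smul_eq_mul, Fin.ext_iff]
  split_ifs <;> norm_num

theorem smax_smin_halfSwitch {l r : Fin N → ℝ} (hl : ∑ j, l j = 1) (hr : ∑ j, r j = 1)
    (h : ∀ i j, r i ≠ 0 → l j ≠ 0 → j ≤ i) :
    smax (smin (halfSwitch N) r) l = (1 / 2 : ℝ) • (l + r) := by
  have hN : 0 < N := by
    by_contra! h0
    obtain rfl : N = 0 := by omega
    simp at hl
  have hbot : smin (delta ⟨0, hN⟩) r = delta ⟨0, hN⟩ :=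
    smin_eq_left_of_support_le hr fun i j hi _ => by simp [eq_of_delta_ne_zero hi, Fin.le_def]
  have htop : smin (delta ⟨N - 1, by omega⟩) r = r :=
    smin_eq_right_of_support_le (sum_delta _) fun i j hi _ => by
      simp [eq_of_delta_ne_zero hi, Fin.le_def]; omega
  have hbot' : smax (delta ⟨0, hN⟩) l = l :=
    smax_eq_right_of_support_le (sum_delta _) fun i j hi _ => by
      simp [eq_of_delta_ne_zero hi, Fin.le_def]
  rw [halfSwitch_eq_smul hN, smin_smul_left, smin_add_left, hbot, htop, smax_smul_left,
    smax_add_left, hbot', smax_eq_left_of_support_le hl h]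

lemma IsProbVec.exists_eq_delta {p : Fin N → ℝ} (hp : IsProbVec p)
    (h : ∀ i j, p i ≠ 0 → p j ≠ 0 → i = j) : ∃ s, p = delta s := by
  obtain ⟨s, -, hs⟩ := Finset.exists_ne_zero_of_sum_ne_zero (hp.2.symm ▸ one_ne_zero)
  have hzero : ∀ i, i ≠ s → p i = 0 := fun i hi => by_contra fun h' => hi (h i s h' hs)
  have hps : p s = 1 := by
    rw [← hp.2, Finset.sum_eq_single s (fun i _ hi => hzero i hi) (by simp)]
  refine ⟨s, funext fun i => ?_⟩
  by_cases hi : i = s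
  · simp [delta, hi, hps]
  · simp [delta, hi, hzero i hi]

end Composition

lemma Finset.card_le_two_of_forall_lt_not_lt {α : Type*} [LinearOrder α] (s : Finset α)
    (h : ∀ a ∈ s, ∀ b ∈ s, ∀ c ∈ s, a < b → ¬ b < c) : s.card ≤ 2 := by
  by_contra! hs
  let e := s.orderEmbOfFin rfl
  have mem : ∀ i, e i ∈ s := s.orderEmbOfFin_mem rfl
  exact h _ (mem ⟨0, by omega⟩) _ (mem ⟨1, hs.trans' one_lt_two⟩) _ (mem ⟨2, hs⟩)
    (e.strictMono (by simp [Fin.lt_def])) (e.strictMono (by simp [Fin.lt_def]))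

section Window

variable {N : ℕ} {B : ℕ → ℕ}

/-- The length of `[a, b) ∩ [B k, B (k + 1))`. -/
def windowMass (B : ℕ → ℕ) (a b k : ℕ) : ℕ :=
  min b (max a (B (k + 1))) - min b (max a (B k))

/-- The law of the block `[B k, B (k + 1))` containing a uniform point of `[a, b)`. -/
def window (N : ℕ) (B : ℕ → ℕ) (a b : ℕ) : Fin N → ℝ :=
  fun k => (windowMass B a b k : ℝ) / ((b - a : ℕ) : ℝ)

def interiorCount (N : ℕ) (B : ℕ → ℕ) (a b : ℕ) : ℕ :=
  ((Finset.Ioo 0 N).filter fun s => a < B s ∧ B s < b).card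

lemma lt_of_windowMass_ne_zero {a b k : ℕ} (h : windowMass B a b k ≠ 0) :
    B k < b ∧ a < B (k + 1) ∧ B k < B (k + 1) := by
  unfold windowMass at h
  omega

lemma lt_of_window_ne_zero {a b : ℕ} {k : Fin N} (h : window N B a b k ≠ 0) :
    B k < b ∧ a < B (k + 1) ∧ B k < B (k + 1) :=
  lt_of_windowMass_ne_zero fun h0 => h (by simp [window, h0])

lemma windowMass_add (hB : Monotone B) {a m b : ℕ} (ham : a ≤ m) (hmb : m ≤ b) (k : ℕ) :
    windowMass B a b k = windowMass B a m k + windowMass B m b k := by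
  have := hB k.le_succ
  unfold windowMass
  omega

lemma window_eq_midpoint (hB : Monotone B) {a m b : ℕ} (ham : a < m) (hm : b - m = m - a) :
    window N B a b = (1 / 2 : ℝ) • (window N B a m + window N B m b) := by
  ext k
  have hba : ((b - a : ℕ) : ℝ) = 2 * ((m - a : ℕ) : ℝ) := by
    rw [show b - a = 2 * (m - a) by omega]
    push_cast
    ring
  simp only [window, Pi.smul_apply, Pi.add_apply, smul_eq_mul,
    windowMass_add hB ham.le (show m ≤ b by omega), hm, hba]
  push_cast
  field_simp

lemma sum_windowMass (hB : Monotone B) {a b : ℕ} (ha : B 0 ≤ a) (hab : a ≤ b) (hb : b ≤ B N) :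
    ∑ k : Fin N, windowMass B a b k = b - a := by
  have hmono : Monotone fun s => min b (max a (B s)) := fun s t hst => by
    have := hB hst
    dsimp only
    omega
  rw [Fin.sum_univ_eq_sum_range (windowMass B a b)]
  exact (Finset.sum_range_tsub hmono N).trans (by omega)

lemma window_isProbVec (hB : Monotone B) {a b : ℕ} (ha : B 0 ≤ a) (hab : a < b)
    (hb : b ≤ B N) : IsProbVec (window N B a b) := by
  refine ⟨fun k => by unfold window; positivity, ?_⟩
  have hpos : ((b - a : ℕ) : ℝ) ≠ 0 := by exact_mod_cast (Nat.sub_pos_of_lt hab).ne'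
  simp only [window, ← Finset.sum_div]
  rw [← Nat.cast_sum, sum_windowMass hB ha hab.le hb, div_self hpos]

lemma window_support_le (hB : Monotone B) {a m b : ℕ} {i j : Fin N}
    (hi : window N B m b i ≠ 0) (hj : window N B a m j ≠ 0) : j ≤ i := by
  have h₁ := (lt_of_window_ne_zero hi).2.1
  have h₂ := (lt_of_window_ne_zero hj).1
  by_contra! hij
  have := hB (show (i : ℕ) + 1 ≤ j from hij)
  omega

lemma window_support_subsingleton (hB : Monotone B) {a b : ℕ}
    (h : interiorCount N B a b = 0) {i j : Fin N}
    (hi : window N B a b i ≠ 0) (hj : window N B a b j ≠ 0) : i = j := by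
  have key : ∀ i j : Fin N, window N B a b i ≠ 0 → window N B a b j ≠ 0 → ¬ i < j := by
    intro i j hi hj hij
    have h₁ := (lt_of_window_ne_zero hi).2.1
    have h₂ := (lt_of_window_ne_zero hj).1
    have := hB (show (i : ℕ) + 1 ≤ j from hij)
    rw [interiorCount, Finset.card_eq_zero, Finset.filter_eq_empty_iff] at h
    have := j.isLt
    exact h (Finset.mem_Ioo.2 ⟨show 0 < (i : ℕ) + 1 by omega, by omega⟩) ⟨h₁, by omega⟩
  exact le_antisymm (not_lt.1 (key j i hj hi)) (not_lt.1 (key i j hi hj))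

lemma card_support_window_le_two (hB : Monotone B) {a b : ℕ}
    (hlen : ∀ k, B k < B (k + 1) → b - a ≤ B (k + 1) - B k) :
    (Finset.univ.filter fun k => window N B a b k ≠ 0).card ≤ 2 := by
  refine Finset.card_le_two_of_forall_lt_not_lt _ fun i hi j hj k hk hij hjk => ?_
  simp only [Finset.mem_filter, Finset.mem_univ, true_and] at hi hj hk
  have h₁ := (lt_of_window_ne_zero hi).2.1
  have h₂ := lt_of_window_ne_zero hj
  have h₃ := (lt_of_window_ne_zero hk).1
  have := hB (show (i : ℕ) + 1 ≤ j from hij)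
  have := hB (show (j : ℕ) + 1 ≤ k from hjk)
  have := hlen j h₂.2.2
  omega

lemma interiorCount_le (a b : ℕ) : interiorCount N B a b ≤ N - 1 :=
  (Finset.card_filter_le _ _).trans (by simp)

lemma interiorCount_add_le {a m b : ℕ} (ham : a ≤ m) (hmb : m ≤ b) :
    interiorCount N B a m + interiorCount N B m b ≤ interiorCount N B a b := by
  unfold interiorCount
  rw [← Finset.card_union_of_disjoint (Finset.disjoint_filter.2 fun s _ h₁ h₂ => by omega)]
  refine Finset.card_le_card fun s hs => ?_
  simp only [Finset.mem_union, Finset.mem_filter] at hs ⊢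
  rcases hs with h | h <;> exact ⟨h.1, by omega⟩

end Window

def twoStateGrid (N q : ℕ) : Set (Fin N → ℝ) :=
  {v | IsProbVec v ∧ (Finset.univ.filter fun i => v i ≠ 0).card ≤ 2 ∧
    ∀ i, ∃ c : ℕ, v i = (c : ℝ) / q}

lemma window_mem_twoStateGrid {N : ℕ} {B : ℕ → ℕ} (hB : Monotone B) {a q : ℕ} (hq : 0 < q)
    (ha : B 0 ≤ a) (hb : a + q ≤ B N) (hlen : ∀ k, B k < B (k + 1) → q ≤ B (k + 1) - B k) :
    window N B a (a + q) ∈ twoStateGrid N q := by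
  refine ⟨window_isProbVec hB ha (by omega) hb, ?_, fun i => ⟨windowMass B a (a + q) i, ?_⟩⟩
  · exact card_support_window_le_two hB (by simpa using hlen)
  · simp [window]

/-- A binary splitting tree of depth `d` has `2 ^ t` nodes at level `t`, but only those containing
one of the `I` interior boundaries are split, at cost one each. -/
def splitCost (d I : ℕ) : ℕ := ∑ t ∈ Finset.range d, min (2 ^ t) I

lemma splitCost_mono (d : ℕ) {I J : ℕ} (h : I ≤ J) : splitCost d I ≤ splitCost d J :=
  Finset.sum_le_sum fun _ _ => min_le_min_left _ h

lemma splitCost_succ_le (d : ℕ) {I I₁ I₂ : ℕ} (hI : 1 ≤ I) (hsum : I₁ + I₂ ≤ I) :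
    1 + splitCost d I₁ + splitCost d I₂ ≤ splitCost (d + 1) I := by
  have hterm : ∀ t ∈ Finset.range d, min (2 ^ t) I₁ + min (2 ^ t) I₂ ≤ min (2 ^ (t + 1)) I :=
    fun t _ => by rw [pow_succ]; omega
  have := Finset.sum_le_sum hterm
  rw [Finset.sum_add_distrib] at this
  simp only [splitCost, Finset.sum_range_succ', pow_zero, min_eq_left hI]
  omega

lemma splitCost_le_f (n M : ℕ) : splitCost n (M - 1) ≤ f n M := by
  have hgeom : ∀ d, ∑ t ∈ Finset.range d, min (2 ^ t) (M - 1) ≤ 2 ^ d - 1 := fun d =>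
    (Finset.sum_le_sum fun t _ => min_le_left _ _).trans (by simpa using (Nat.geomSum_eq le_rfl d).le)
  unfold f splitCost
  split_ifs with h
  · exact hgeom n
  · set L := Nat.clog 2 M
    rw [← Finset.sum_range_add_sum_Ico _ (not_le.1 h).le]
    have hfar : ∑ t ∈ Finset.Ico L n, min (2 ^ t) (M - 1) ≤ (M - 1) * (n - L) := by
      simpa [mul_comm] using Finset.sum_le_sum fun t (_ : t ∈ Finset.Ico L n) =>
        min_le_right (2 ^ t) (M - 1)
    have := hgeom L
    have := Nat.one_le_two_pow (n := L)
    omega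

theorem exists_realizable2_window {N : ℕ} {B : ℕ → ℕ} (hB : Monotone B) {q : ℕ} (hq : 0 < q)
    (hlen : ∀ k, B k < B (k + 1) → q ≤ B (k + 1) - B k) (d : ℕ) {a : ℕ} (ha : B 0 ≤ a)
    (hb : a + 2 ^ d * q ≤ B N) :
    ∃ c ≤ splitCost d (interiorCount N B a (a + 2 ^ d * q)),
      Realizable2 (twoStateGrid N q) {halfSwitch N} (window N B a (a + 2 ^ d * q)) c := by
  induction d generalizing a with
  | zero =>
    simp only [pow_zero, one_mul] at hb ⊢
    exact ⟨0, Nat.zero_le _, .free (window_mem_twoStateGrid hB hq ha hb hlen)⟩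
  | succ d ih =>
    set m := a + 2 ^ d * q with hm
    set b := a + 2 ^ (d + 1) * q
    have hbm : b = m + 2 ^ d * q := by simp only [b, m, pow_succ]; ring
    have hd : 0 < 2 ^ d * q := by positivity
    by_cases h0 : interiorCount N B a b = 0
    · obtain ⟨s, hs⟩ := (window_isProbVec hB ha (by omega) hb).exists_eq_delta
        fun i j => window_support_subsingleton hB h0
      exact ⟨0, Nat.zero_le _, hs ▸ .point s⟩
    obtain ⟨c₁, hc₁, H₁⟩ := ih ha (by omega)
    rw [← hm] at hc₁ H₁
    obtain ⟨c₂, hc₂, H₂⟩ := ih (a := m) (by omega) (by omega)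
    rw [← hbm] at hc₂ H₂
    have hmid : window N B a b = smax (smin (halfSwitch N) (window N B m b)) (window N B a m) := by
      rw [smax_smin_halfSwitch (window_isProbVec hB ha (by omega) (by omega)).2
        (window_isProbVec hB (by omega) (by omega) hb).2 fun i j => window_support_le hB,
        window_eq_midpoint (m := m) hB (by omega) (by omega)]
    refine ⟨1 + c₂ + c₁, ?_, hmid ▸ .parallel (.series (.paid rfl) H₂) H₁⟩
    have := splitCost_succ_le d (Nat.one_le_iff_ne_zero.2 h0)
      (interiorCount_add_le (N := N) (B := B) (show a ≤ m by omega) (show m ≤ b by omega))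
    omega

def partialSum {N : ℕ} (x : Fin N → ℕ) (s : ℕ) : ℕ :=
  ∑ i ∈ Finset.range s, if h : i < N then x ⟨i, h⟩ else 0

section PartialSum

variable {N : ℕ} (x : Fin N → ℕ)

lemma partialSum_mono : Monotone (partialSum x) := fun _ _ h =>
  Finset.sum_le_sum_of_subset (Finset.range_mono h)

lemma partialSum_succ (s : ℕ) :
    partialSum x (s + 1) = partialSum x s + if h : s < N then x ⟨s, h⟩ else 0 :=
  Finset.sum_range_succ _ s

lemma partialSum_self : partialSum x N = ∑ k, x k := by
  simp [partialSum, Finset.sum_range]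

lemma window_scaled_partialSum (n : ℕ) {q : ℕ} (hx : ∑ k, x k = q) :
    window N (fun s => 2 ^ n * partialSum x s) 0 (2 ^ n * q) = fun k => (x k : ℝ) / q := by
  subst hx
  ext k
  have hmass : windowMass (fun s => 2 ^ n * partialSum x s) 0 (2 ^ n * ∑ k, x k) k =
      2 ^ n * x k := by
    have hsucc := partialSum_succ x k
    rw [dif_pos k.isLt, Fin.eta] at hsucc
    have hle := partialSum_mono x (show (k : ℕ) + 1 ≤ N from k.isLt)
    rw [partialSum_self, hsucc] at hle
    have := Nat.mul_le_mul_left (2 ^ n) hle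
    simp only [windowMass, hsucc, mul_add] at this ⊢
    omega
  simp only [window, hmass, Nat.sub_zero]
  push_cast
  exact mul_div_mul_left _ _ (by positivity)

lemma le_sub_of_scaled_partialSum_lt {q n : ℕ} (hqn : q ≤ 2 ^ n) {k : ℕ}
    (hk : 2 ^ n * partialSum x k < 2 ^ n * partialSum x (k + 1)) :
    q ≤ 2 ^ n * partialSum x (k + 1) - 2 ^ n * partialSum x k := by
  simp only [partialSum_succ, mul_add, Nat.add_sub_cancel_left] at hk ⊢
  split_ifs at hk ⊢ with hkN
  · have hxk : 0 < x ⟨k, hkN⟩ := by simpa using hk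
    exact hqn.trans (Nat.le_mul_of_pos_right _ hxk)
  · simp at hk

end PartialSum

theorem state_reduction_general (N : ℕ) (q : ℕ) (hq : 1 ≤ q)
    (x : Fin N → ℕ) (hx : ∑ k, x k = q) :
    ∃ m ≤ f (Nat.clog 2 q) N,
      Realizable2
        {v : Fin N → ℝ | IsProbVec v ∧ (Finset.univ.filter fun i => v i ≠ 0).card ≤ 2 ∧
          ∀ i, ∃ c : ℕ, v i = (c : ℝ) / q}
        {halfSwitch N}
        (fun k => (x k : ℝ) / q) m := by
  set n := Nat.clog 2 q
  set B := fun s => 2 ^ n * partialSum x s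
  have hB : Monotone B := fun s t h => Nat.mul_le_mul_left _ (partialSum_mono x h)
  have hBN : B N = 2 ^ n * q := by simp only [B, partialSum_self, hx]
  have hlen : ∀ k, B k < B (k + 1) → q ≤ B (k + 1) - B k := fun _ =>
    le_sub_of_scaled_partialSum_lt x (Nat.le_pow_clog one_lt_two q)
  obtain ⟨c, hc, H⟩ := exists_realizable2_window (N := N) hB hq hlen n (a := 0)
    (by simp [B, partialSum]) (by rw [hBN, zero_add])
  refine ⟨c, hc.trans ((splitCost_mono n (interiorCount_le _ _)).trans (splitCost_le_f n N)), ?_⟩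
  rwa [zero_add, window_scaled_partialSum x n hx] at H

/-- State Reduction: any `(x₀/q, …, x_{N-1}/q)` can be built from point masses
and two-active-state probability vectors with entries that are integer multiples
of `1/q` (cost 0 each) together with `N`-state ½-pswitches (cost 1 each), at
total cost at most `f(⌈log₂ q⌉, N)`. -/
theorem state_reduction (N : ℕ) (hN : 1 ≤ N) (q : ℕ) (hq : 1 ≤ q)
    (x : Fin N → ℕ) (hx : ∑ k, x k = q) :
    ∃ m ≤ f (Nat.clog 2 q) N,
      Realizable2
        {v : Fin N → ℝ | IsProbVec v ∧ (Finset.univ.filter fun i => v i ≠ 0).card ≤ 2 ∧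
          ∀ i, ∃ c : ℕ, v i = (c : ℝ) / q}
        {halfSwitch N}
        (fun k => (x k : ℝ) / q) m :=
  state_reduction_general N q hq x hx
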